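/- arXiv:1104.2355 — 3 statements merged into one kernel-verified Lean document; each statement's English description precedes it below -/
import Mathlib

section
/- Let c ≥ 0 be a real number and define Q(x) = (gaussianReal 0 1) (Set.Ici x), the standard normal tail probability. Then the function s ↦ Q( √2 · (c − s/2) / √s ) is strictly monotone increasing on (0, ∞): for all reals 0 < s₁ < s₂, Q( √2 · (c − s₁/2) / √s₁ ) < Q( √2 · (c − s₂/2) / √s₂ ). -/
open ProbabilityTheory Real

/-! Written as `√2 (c / √s - √s / 2)`, the argument of `Q` strictly decreases in `s` when
`c ≥ 0`, and the Gaussian tail `x ↦ P(X ≥ x)` strictly decreases because the Gaussian charges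
every nondegenerate interval. -/

open MeasureTheory NNReal Set in
lemma gaussianReal_Ici_strictAnti (μ : ℝ) {v : ℝ≥0} (hv : v ≠ 0) :
    StrictAnti fun x ↦ gaussianReal μ v (Ici x) := by
  intro a b hab
  have hIco : gaussianReal μ v (Ico a b) ≠ 0 := fun h ↦
    hab.not_ge (by simpa using gaussianReal_absolutelyContinuous' μ hv h)
  calc gaussianReal μ v (Ici b)
      < gaussianReal μ v (Ici b) + gaussianReal μ v (Ico a b) :=
        ENNReal.lt_add_right (measure_ne_top _ _) hIco
    _ = gaussianReal μ v (Ici a) := by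
        rw [add_comm, ← measure_union ((Iio_disjoint_Ici le_rfl).mono_left Ico_subset_Iio_self)
          measurableSet_Ici, Ico_union_Ici_eq_Ici hab.le]

lemma sub_half_div_sqrt_strictAntiOn {c : ℝ} (hc : 0 ≤ c) :
    StrictAntiOn (fun s ↦ (c - s / 2) / √s) (Set.Ioi 0) := by
  have hsplit : ∀ s : ℝ, 0 < s → (c - s / 2) / √s = c / √s - √s / 2 := fun s hs ↦ by
    have := sqrt_pos.2 hs
    field_simp
    rw [sq_sqrt hs.le]
  intro s₁ (h₁ : 0 < s₁) s₂ (h₂ : 0 < s₂) h₁₂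
  have hsqrt : √s₁ < √s₂ := sqrt_lt_sqrt h₁.le h₁₂
  simp only [hsplit s₁ h₁, hsplit s₂ h₂]
  have hdiv : c / √s₂ ≤ c / √s₁ := by gcongr
  linarith

/-- The detection probability `Q(√2 (c − s/2) / √s)` under perfect CSI, where
`Q` is the standard normal tail probability, is strictly increasing in the SNR term `s`. -/
theorem detection_prob_strict_mono (c : ℝ) (hc : 0 ≤ c) (s₁ s₂ : ℝ)
    (h₁ : 0 < s₁) (h₁₂ : s₁ < s₂) :
    (gaussianReal 0 1) (Set.Ici (Real.sqrt 2 * (c - s₁ / 2) / Real.sqrt s₁))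
      < (gaussianReal 0 1) (Set.Ici (Real.sqrt 2 * (c - s₂ / 2) / Real.sqrt s₂)) := by
  apply gaussianReal_Ici_strictAnti 0 one_ne_zero
  simp only [mul_div_assoc]
  gcongr ?_ * ?_
  exact sub_half_div_sqrt_strictAntiOn hc h₁ (h₁.trans h₁₂) h₁₂
end

section
/- Let (Ω, P) be a probability space and X, Y : Ω → ℝ be independent random variables with Measure.map X P = gaussianReal m_X (σ_X²) and Measure.map Y P = gaussianReal m_Y (σ_Y²), where σ_X > 0 and σ_Y > 0. Set ρ_X = m_X/σ_X and ρ_Y = m_Y/σ_Y. Then for every real t with |t| < 1, mgf (fun ω => X ω * Y ω / (σ_X * σ_Y)) P t = exp( ((ρ_X² + ρ_Y²)·t² + 2·ρ_X·ρ_Y·t) / (2·(1 − t²)) ) / √(1 − t²). -/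
/-!
Conditionally on `X = x`, the expectation of `exp (s X Y)` is the Gaussian moment generating
function of `Y` at `s x`, i.e. the exponential of a quadratic polynomial in `x`. Integrating
it against the law of `X` is a Gaussian integral after completing the square, and it is finite
exactly when the quadratic coefficient stays below `1 / (2 Var X)`, which for the normalized
product `s = t / (σX σY)` means `t ^ 2 < 1`.
-/

open MeasureTheory ProbabilityTheory Real

open scoped NNReal

lemma exp_neg_mul_sq_add_mul_eq {b : ℝ} (hb : 0 < b) (c x : ℝ) :
    rexp (-b * x ^ 2 + c * x) = rexp (c ^ 2 / (4 * b)) * rexp (-b * (x - c / (2 * b)) ^ 2) := by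
  rw [← Real.exp_add]
  congr 1
  field_simp
  ring

lemma integral_exp_neg_mul_sq_add_mul {b : ℝ} (hb : 0 < b) (c : ℝ) :
    ∫ x, rexp (-b * x ^ 2 + c * x) = rexp (c ^ 2 / (4 * b)) * √(π / b) := by
  simp_rw [exp_neg_mul_sq_add_mul_eq hb, integral_const_mul,
    integral_sub_right_eq_self (fun x ↦ rexp (-b * x ^ 2)), integral_gaussian]

lemma integral_exp_quadratic_gaussianReal (m : ℝ) {v : ℝ≥0} {c : ℝ} (hc : 2 * v * c < 1)
    (d : ℝ) :
    ∫ x, rexp (c * x ^ 2 + d * x) ∂gaussianReal m v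
      = rexp ((2 * m * d + 2 * c * m ^ 2 + v * d ^ 2) / (2 * (1 - 2 * v * c)))
        / √(1 - 2 * v * c) := by
  rcases eq_or_ne v 0 with rfl | hv
  · simp only [gaussianReal_zero_var, integral_dirac, NNReal.coe_zero, mul_zero, zero_mul,
      sub_zero, add_zero, Real.sqrt_one, div_one]
    ring_nf
  have hv_pos : (0 : ℝ) < v := by positivity
  have hD : 0 < 1 - 2 * v * c := by linarith
  set p := (1 - 2 * v * c) / (2 * v) with hp_def
  have hp : 0 < p := by positivity
  set q := d + m / v with hq_def
  have h_density (x : ℝ) : gaussianPDFReal m v x * rexp (c * x ^ 2 + d * x)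
      = ((√(2 * π * v))⁻¹ * rexp (-m ^ 2 / (2 * v))) * rexp (-p * x ^ 2 + q * x) := by
    simp only [gaussianPDFReal_def, mul_assoc, ← Real.exp_add]
    congr 2
    rw [hp_def, hq_def]
    field_simp
    ring
  rw [integral_gaussianReal_eq_integral_smul hv]
  simp_rw [smul_eq_mul, h_density, integral_const_mul, integral_exp_neg_mul_sq_add_mul hp]
  have h_sqrt : (√(2 * π * v))⁻¹ * √(π / p) = (√(1 - 2 * v * c))⁻¹ := by
    rw [← Real.sqrt_inv, ← Real.sqrt_inv, ← Real.sqrt_mul (by positivity), hp_def]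
    field_simp
  have h_exponent : -m ^ 2 / (2 * v) + q ^ 2 / (4 * p)
      = (2 * m * d + 2 * c * m ^ 2 + v * d ^ 2) / (2 * (1 - 2 * v * c)) := by
    rw [hp_def, hq_def]
    field_simp
    ring
  calc _ = ((√(2 * π * v))⁻¹ * √(π / p)) * (rexp (-m ^ 2 / (2 * v)) * rexp (q ^ 2 / (4 * p))) := by
        ring
    _ = _ := by rw [h_sqrt, ← Real.exp_add, h_exponent]; ring

lemma integrable_exp_quadratic_gaussianReal (m : ℝ) {v : ℝ≥0} {c : ℝ} (hc : 2 * v * c < 1)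
    (d : ℝ) : Integrable (fun x ↦ rexp (c * x ^ 2 + d * x)) (gaussianReal m v) := by
  have hD : 0 < 1 - 2 * v * c := by linarith
  refine Integrable.of_integral_ne_zero ?_
  rw [integral_exp_quadratic_gaussianReal m hc]
  positivity

lemma mgf_fst_mul_snd_prod_eq_integral {μ ν : Measure ℝ} [SFinite μ] [SFinite ν] {t : ℝ}
    (h_inner : ∀ x, Integrable (fun y ↦ rexp (t * x * y)) ν)
    (h_outer : Integrable (fun x ↦ mgf id ν (t * x)) μ) :
    mgf (fun p : ℝ × ℝ ↦ p.1 * p.2) (μ.prod ν) t = ∫ x, mgf id ν (t * x) ∂μ := by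
  have h_assoc (p : ℝ × ℝ) : t * (p.1 * p.2) = t * p.1 * p.2 := (mul_assoc _ _ _).symm
  have h_int : Integrable (fun p : ℝ × ℝ ↦ rexp (t * p.1 * p.2)) (μ.prod ν) := by
    rw [integrable_prod_iff (by fun_prop)]
    simp only [Real.norm_eq_abs, Real.abs_exp]
    exact ⟨.of_forall h_inner, h_outer⟩
  simp only [mgf, h_assoc, id]
  exact integral_prod _ h_int

lemma ProbabilityTheory.IndepFun.mgf_mul_eq_mgf_prod {Ω : Type*} [MeasurableSpace Ω]
    {P : Measure Ω} [IsFiniteMeasure P] {X Y : Ω → ℝ} (hXY : IndepFun X Y P)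
    (hX : AEMeasurable X P) (hY : AEMeasurable Y P) (t : ℝ) :
    mgf (fun ω ↦ X ω * Y ω) P t
      = mgf (fun p : ℝ × ℝ ↦ p.1 * p.2) ((P.map X).prod (P.map Y)) t := by
  rw [← (indepFun_iff_map_prod_eq_prod_map_map hX hY).mp hXY,
    mgf_map (hX.prodMk hY) (by fun_prop)]
  rfl

lemma mgf_mul_of_indepFun_gaussianReal {Ω : Type*} [MeasurableSpace Ω] {P : Measure Ω}
    [IsProbabilityMeasure P] {X Y : Ω → ℝ} (hXY : IndepFun X Y P) {mX mY : ℝ} {vX vY : ℝ≥0}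
    (hX : P.map X = gaussianReal mX vX) (hY : P.map Y = gaussianReal mY vY) {t : ℝ}
    (ht : vX * vY * t ^ 2 < 1) :
    mgf (fun ω ↦ X ω * Y ω) P t
      = rexp ((2 * mX * mY * t + (vY * mX ^ 2 + vX * mY ^ 2) * t ^ 2)
          / (2 * (1 - vX * vY * t ^ 2))) / √(1 - vX * vY * t ^ 2) := by
  have hX_meas : AEMeasurable X P := .of_map_ne_zero (hX ▸ IsProbabilityMeasure.ne_zero _)
  have hY_meas : AEMeasurable Y P := .of_map_ne_zero (hY ▸ IsProbabilityMeasure.ne_zero _)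
  have h_var : 2 * vX * (vY * t ^ 2 / 2) = vX * vY * t ^ 2 := by ring
  have hc : 2 * vX * (vY * t ^ 2 / 2) < 1 := h_var ▸ ht
  have h_inner (x : ℝ) :
      mgf id (P.map Y) (t * x) = rexp (vY * t ^ 2 / 2 * x ^ 2 + mY * t * x) := by
    rw [hY, mgf_id_gaussianReal]
    ring_nf
  calc mgf (fun ω ↦ X ω * Y ω) P t = ∫ x, mgf id (P.map Y) (t * x) ∂(P.map X) := by
        rw [hXY.mgf_mul_eq_mgf_prod hX_meas hY_meas]
        refine mgf_fst_mul_snd_prod_eq_integral (fun x ↦ ?_) ?_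
        · rw [hY]
          exact integrable_exp_mul_gaussianReal _
        · simp_rw [h_inner, hX]
          exact integrable_exp_quadratic_gaussianReal _ hc _
    _ = ∫ x, rexp (vY * t ^ 2 / 2 * x ^ 2 + mY * t * x) ∂gaussianReal mX vX := by
        simp_rw [h_inner, hX]
    _ = _ := by
        rw [integral_exp_quadratic_gaussianReal _ hc, h_var]
        ring_nf

/-- Craig's formula: the moment generating function of the normalized product of two
independent normal random variables. -/
theorem mgf_product_of_normals
    {Ω : Type*} [MeasurableSpace Ω] (P : Measure Ω) [IsProbabilityMeasure P]
    (X Y : Ω → ℝ) (hXY : IndepFun X Y P)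
    (mX mY σX σY : ℝ) (hσX : 0 < σX) (hσY : 0 < σY)
    (hX : Measure.map X P = gaussianReal mX ⟨σX ^ 2, sq_nonneg σX⟩)
    (hY : Measure.map Y P = gaussianReal mY ⟨σY ^ 2, sq_nonneg σY⟩)
    (t : ℝ) (ht : |t| < 1) :
    mgf (fun ω => X ω * Y ω / (σX * σY)) P t
      = Real.exp ((((mX / σX) ^ 2 + (mY / σY) ^ 2) * t ^ 2
            + 2 * (mX / σX) * (mY / σY) * t) / (2 * (1 - t ^ 2)))
        / Real.sqrt (1 - t ^ 2) := by
  have h_var : σX ^ 2 * σY ^ 2 * (t / (σX * σY)) ^ 2 = t ^ 2 := by field_simp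
  have ht' : σX ^ 2 * σY ^ 2 * (t / (σX * σY)) ^ 2 < 1 := by
    rwa [h_var, sq_lt_one_iff_abs_lt_one]
  simp_rw [div_eq_inv_mul (X _ * Y _), mgf_const_mul, inv_mul_eq_div]
  rw [mgf_mul_of_indepFun_gaussianReal hXY hX hY ht']
  -- `⟨σ ^ 2, _⟩` is elaborated at the subtype, so `NNReal.coe_mk` does not fire
  dsimp only [NNReal.toReal]
  rw [h_var]
  congr 2
  field_simp
  ring
end

section
/- Fix reals t and ρ_Y. For ρ > 0 define α(ρ) = t/√(1 + ρ² + ρ_Y²) and F(ρ) = exp( ((ρ² + ρ_Y²)·α(ρ)² + 2·ρ·ρ_Y·α(ρ)³) / (2·(1 − α(ρ)²)) ) / √(1 − α(ρ)²). Then F(ρ) tends to exp(t²/2) as ρ → ∞ (Filter.Tendsto F Filter.atTop (nhds (exp(t²/2)))). -/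
open Real Filter Topology

/-! Writing `u = ρ α(ρ)`, the exponent of `F` is `(u² + ρ_Y² α² + 2 ρ_Y u α²) / (2 (1 - α²))`.
As `ρ → ∞` we have `α → 0` while `u = t ρ / √(1 + ρ² + ρ_Y²) → t`, so by continuity
`F → exp (t² / 2) / √1`. -/

lemma tendsto_one_add_sq_add_atTop (c : ℝ) :
    Tendsto (fun ρ : ℝ => 1 + ρ ^ 2 + c) atTop atTop :=
  tendsto_atTop_add_const_right _ c <|
    tendsto_atTop_add_const_left _ 1 <| tendsto_pow_atTop two_ne_zero

lemma tendsto_div_sqrt_one_add_sq_add_atTop_zero (t c : ℝ) :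
    Tendsto (fun ρ : ℝ => t / √(1 + ρ ^ 2 + c)) atTop (𝓝 0) :=
  tendsto_const_nhds.div_atTop (tendsto_sqrt_atTop.comp (tendsto_one_add_sq_add_atTop c))

lemma tendsto_div_sqrt_one_add_sq_add_atTop_one {c : ℝ} (hc : 0 ≤ c) :
    Tendsto (fun ρ : ℝ => ρ / √(1 + ρ ^ 2 + c)) atTop (𝓝 1) := by
  have hsq : Tendsto (fun ρ : ℝ => √(1 - (1 + c) / (1 + ρ ^ 2 + c))) atTop (𝓝 1) := by
    simpa using ((tendsto_const_nhds (x := (1 : ℝ))).sub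
      ((tendsto_const_nhds (x := 1 + c)).div_atTop (tendsto_one_add_sq_add_atTop c))).sqrt
  refine hsq.congr' ?_
  filter_upwards [eventually_ge_atTop 0] with ρ hρ
  have hs : 0 < 1 + ρ ^ 2 + c := by positivity
  rw [sqrt_eq_iff_eq_sq (sub_nonneg.2 ((div_le_one hs).2 (by nlinarith))) (by positivity),
    div_pow, sq_sqrt hs.le]
  field_simp
  ring

lemma tendsto_exp_div_sqrt_of_tendsto {β : Type*} {l : Filter β} {u a : β → ℝ} (c t : ℝ)
    (hu : Tendsto u l (𝓝 t)) (ha : Tendsto a l (𝓝 0)) :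
    Tendsto (fun x => exp ((u x ^ 2 + c ^ 2 * a x ^ 2 + 2 * c * u x * a x ^ 2)
        / (2 * (1 - a x ^ 2))) / √(1 - a x ^ 2)) l (𝓝 (exp (t ^ 2 / 2))) := by
  have hden : Tendsto (fun x => 1 - a x ^ 2) l (𝓝 1) := by
    simpa using tendsto_const_nhds.sub (ha.pow 2)
  have hnum : Tendsto (fun x => u x ^ 2 + c ^ 2 * a x ^ 2 + 2 * c * u x * a x ^ 2) l
      (𝓝 (t ^ 2)) := by
    simpa using ((hu.pow 2).add (tendsto_const_nhds.mul (ha.pow 2))).add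
      ((tendsto_const_nhds.mul hu).mul (ha.pow 2))
  simpa [Pi.div_def] using
    (hnum.div (hden.const_mul 2) (by norm_num)).rexp.div hden.sqrt (by norm_num)

/-- The mgf of the standardized product of two independent normals converges pointwise to
the standard normal mgf `exp(t²/2)` as the signal-to-noise ratio `ρ` tends to infinity. -/
theorem mgf_product_tendsto_gaussian (t ρY : ℝ)
    (α F : ℝ → ℝ)
    (hα : ∀ ρ, α ρ = t / Real.sqrt (1 + ρ ^ 2 + ρY ^ 2))
    (hF : ∀ ρ, F ρ = Real.exp (((ρ ^ 2 + ρY ^ 2) * (α ρ) ^ 2 + 2 * ρ * ρY * (α ρ) ^ 3)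
          / (2 * (1 - (α ρ) ^ 2))) / Real.sqrt (1 - (α ρ) ^ 2)) :
    Tendsto F atTop (nhds (Real.exp (t ^ 2 / 2))) := by
  have hα_zero : Tendsto α atTop (𝓝 0) := by
    rw [funext hα]
    exact tendsto_div_sqrt_one_add_sq_add_atTop_zero t (ρY ^ 2)
  have hρα : Tendsto (fun ρ => ρ * α ρ) atTop (𝓝 t) := by
    have := (tendsto_div_sqrt_one_add_sq_add_atTop_one (sq_nonneg ρY)).const_mul t
    rw [mul_one] at this
    refine this.congr fun ρ => ?_
    rw [hα]
    ring
  refine (tendsto_exp_div_sqrt_of_tendsto ρY t hρα hα_zero).congr fun ρ => ?_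
  rw [hF]
  congr 3
  ring
end
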